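/- In the semigroup of convex closed subsets of the plane ℝ² containing the origin with Minkowski addition and polarity: if K = [−u, u] and L = [−v, v] are centered segments, then (K + L*)* = (1 + |⟨u, v⟩|)^{-1} [−v, v]. -/

import Mathlib

/-!
Write `S = [-v, v]*` for the strip `|⟪w, v⟫| ≤ 1`. A point `x` lies in `([-u, u] + S)*` iff
`|⟪x, u⟫| + ⟪x, b⟫ ≤ 1` for every `b ∈ S`. Since `0 ∈ [-u, u]`, such an `x` lies in `S*`, which
is contained in the line `ℝ v`; writing `x = c v`, the supremum of `⟪c v, b⟫` over the strip is
`|c|`, so the condition reads `|c| (1 + |⟪u, v⟫|) ≤ 1`.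
-/

open Pointwise
open scoped RealInnerProductSpace

noncomputable section

/-- The polar of a set `A` in Euclidean space. -/
def polarSet {d : ℕ} (A : Set (EuclideanSpace ℝ (Fin d))) : Set (EuclideanSpace ℝ (Fin d)) :=
  {w | ∀ a ∈ A, ⟪w, a⟫ ≤ (1 : ℝ)}

section Module

variable {E : Type*} [AddCommGroup E] [Module ℝ E]

theorem segment_neg_self_eq_image (v : E) :
    segment ℝ (-v) v = (· • v) '' Set.Icc (-1 : ℝ) 1 := by
  have := image_segment ℝ (LinearMap.toSpanSingleton ℝ E v).toAffineMap (-1) 1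
  rw [segment_eq_Icc (by norm_num)] at this
  simpa using this.symm

theorem mem_segment_neg_self_iff {v x : E} :
    x ∈ segment ℝ (-v) v ↔ ∃ t : ℝ, |t| ≤ 1 ∧ t • v = x := by
  simp [segment_neg_self_eq_image, abs_le]

end Module

section InnerProductSpace

variable {E : Type*} [NormedAddCommGroup E] [InnerProductSpace ℝ E]

theorem forall_mem_segment_neg_self_inner_le_iff {u x : E} {r : ℝ} :
    (∀ p ∈ segment ℝ (-u) u, ⟪x, p⟫ ≤ r) ↔ |⟪x, u⟫| ≤ r := by
  simp only [mem_segment_neg_self_iff, forall_exists_index, and_imp, forall_apply_eq_imp_iff₂,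
    real_inner_smul_right]
  refine ⟨fun h ↦ abs_le.2 ⟨?_, ?_⟩, fun h t ht ↦ ?_⟩
  · linarith [h (-1) (by norm_num)]
  · linarith [h 1 (by norm_num)]
  · calc t * ⟪x, u⟫ ≤ |t| * |⟪x, u⟫| := by rw [← abs_mul]; exact le_abs_self _
      _ ≤ 1 * |⟪x, u⟫| := by gcongr
      _ ≤ r := by linarith

end InnerProductSpace

variable {d : ℕ}

theorem mem_polarSet_segment_iff {v w : EuclideanSpace ℝ (Fin d)} :
    w ∈ polarSet (segment ℝ (-v) v) ↔ |⟪w, v⟫| ≤ 1 :=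
  forall_mem_segment_neg_self_inner_le_iff

theorem mem_polarSet_segment_add_iff {u x : EuclideanSpace ℝ (Fin d)}
    {B : Set (EuclideanSpace ℝ (Fin d))} :
    x ∈ polarSet (segment ℝ (-u) u + B) ↔ ∀ b ∈ B, |⟪x, u⟫| + ⟪x, b⟫ ≤ 1 := by
  simp only [polarSet, Set.mem_ofPred_eq, ← Set.image2_add, Set.forall_mem_image2, inner_add_right,
    ← le_sub_iff_add_le, ← forall_mem_segment_neg_self_inner_le_iff]
  exact forall₂_comm

theorem mem_span_singleton_of_mem_polarSet_polarSet_segment {v x : EuclideanSpace ℝ (Fin d)}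
    (hx : x ∈ polarSet (polarSet (segment ℝ (-v) v))) : x ∈ ℝ ∙ v := by
  rw [← (ℝ ∙ v).orthogonal_orthogonal, Submodule.mem_orthogonal]
  intro w hw
  rw [Submodule.mem_orthogonal_singleton_iff_inner_left] at hw
  have hline (r : ℝ) : r * ⟪w, x⟫ ≤ 1 := by
    simpa [real_inner_smul_right, real_inner_comm] using
      hx (r • w) (mem_polarSet_segment_iff.2 (by simp [real_inner_smul_left, hw]))
  by_contra h
  linarith [hline (2 / ⟪w, x⟫), div_mul_cancel₀ (2 : ℝ) h]

theorem exists_mem_polarSet_segment_inner_smul_eq_abs {v : EuclideanSpace ℝ (Fin d)} (hv : v ≠ 0)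
    (c : ℝ) : ∃ b ∈ polarSet (segment ℝ (-v) v), ⟪c • v, b⟫ = |c| := by
  have hv2 : ‖v‖ ^ 2 ≠ 0 := by positivity
  refine ⟨(SignType.sign c / ‖v‖ ^ 2 : ℝ) • v, mem_polarSet_segment_iff.2 ?_, ?_⟩
  · rw [real_inner_smul_left, real_inner_self_eq_norm_sq, div_mul_cancel₀ _ hv2]
    cases SignType.sign c <;> simp
  · rw [real_inner_smul_left, real_inner_smul_right, real_inner_self_eq_norm_sq,
      ← self_mul_sign c]
    field_simp

theorem inner_smul_le_abs_of_mem_polarSet_segment {v b : EuclideanSpace ℝ (Fin d)}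
    (hb : b ∈ polarSet (segment ℝ (-v) v)) (c : ℝ) : ⟪c • v, b⟫ ≤ |c| := by
  rw [real_inner_smul_left, real_inner_comm]
  calc c * ⟪b, v⟫ ≤ |c| * |⟪b, v⟫| := by rw [← abs_mul]; exact le_abs_self _
    _ ≤ |c| * 1 := by gcongr; exact mem_polarSet_segment_iff.1 hb
    _ = |c| := mul_one _

theorem polarSet_segment_add_polarSet_segment_subset (u v : EuclideanSpace ℝ (Fin d)) :
    polarSet (segment ℝ (-u) u + polarSet (segment ℝ (-v) v)) ⊆
      (1 + |⟪u, v⟫|)⁻¹ • segment ℝ (-v) v := by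
  intro x hx
  rw [mem_polarSet_segment_add_iff] at hx
  have hxv : x ∈ polarSet (polarSet (segment ℝ (-v) v)) := fun b hb ↦
    (le_add_of_nonneg_left (abs_nonneg _)).trans (hx b hb)
  obtain ⟨c, rfl⟩ := Submodule.mem_span_singleton.1
    (mem_span_singleton_of_mem_polarSet_polarSet_segment hxv)
  rcases eq_or_ne v 0 with rfl | hv
  · simp
  obtain ⟨b, hb, hcb⟩ := exists_mem_polarSet_segment_inner_smul_eq_abs hv c
  have hc := hx b hb
  rw [hcb, real_inner_smul_left, abs_mul, real_inner_comm u v] at hc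
  have hpos : 0 < 1 + |⟪u, v⟫| := by positivity
  rw [Set.mem_smul_set_iff_inv_smul_mem₀ (inv_ne_zero hpos.ne'), inv_inv, smul_smul,
    mem_segment_neg_self_iff]
  refine ⟨_, ?_, rfl⟩
  rw [abs_mul, abs_of_pos hpos]
  linarith

theorem smul_segment_subset_polarSet_segment_add_polarSet_segment
    (u v : EuclideanSpace ℝ (Fin d)) :
    (1 + |⟪u, v⟫|)⁻¹ • segment ℝ (-v) v ⊆
      polarSet (segment ℝ (-u) u + polarSet (segment ℝ (-v) v)) := by
  rintro _ ⟨_, hy, rfl⟩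
  obtain ⟨s, hs, rfl⟩ := mem_segment_neg_self_iff.1 hy
  rw [mem_polarSet_segment_add_iff]
  intro b hb
  set r := 1 + |⟪u, v⟫|
  have hpos : 0 < r := by positivity
  dsimp only
  rw [smul_smul]
  calc |⟪(r⁻¹ * s) • v, u⟫| + ⟪(r⁻¹ * s) • v, b⟫ ≤ r⁻¹ * |s| * |⟪u, v⟫| + r⁻¹ * |s| := by
        grw [inner_smul_le_abs_of_mem_polarSet_segment hb]
        rw [real_inner_smul_left, abs_mul, abs_mul, abs_inv, abs_of_pos hpos, real_inner_comm]
    _ = r⁻¹ * r * |s| := by ring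
    _ ≤ 1 := by rw [inv_mul_cancel₀ hpos.ne', one_mul]; exact hs

/-- For centred segments `K = [−u,u]` and `L = [−v,v]` in the plane,
`(K + L*)* = (1 + |⟨u,v⟩|)⁻¹ [−v,v]`. -/
theorem polar_segment_add_strip (u v : EuclideanSpace ℝ (Fin 2)) :
    polarSet (segment ℝ (-u) u + polarSet (segment ℝ (-v) v)) =
      (1 + |⟪u, v⟫|)⁻¹ • segment ℝ (-v) v :=
  (polarSet_segment_add_polarSet_segment_subset u v).antisymm
    (smul_segment_subset_polarSet_segment_add_polarSet_segment u v)
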